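/- Let $c \in \mathbb{R}^n$, $A \in \mathbb{R}^{m \times n}$, $b \in \mathbb{R}^m$, and let $X \subseteq \mathbb{R}^n$ be a nonempty finite set. Define $g(\lambda) = \min_{x \in X} \big( c^T x + \lambda^T(Ax - b) \big)$ for $\lambda \ge 0$. Then $\sup_{\lambda \ge 0} g(\lambda) = \inf \{ c^T x : A x \le b,\ x \in \mathrm{conv}(X) \}$, where $\mathrm{conv}(X)$ is the convex hull of $X$ (with the convention that both sides equal $+\infty$ when the right feasible set is empty, under a suitable feasibility assumption). -/

import Mathlib

/-!
Pass to the value space: the affine map `x ↦ (A x - b, c ⬝ᵥ x)` sends `conv X` onto the convex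
hull `C` of finitely many points, a compact convex set, and turns the Lagrangian into the linear
form `λ ⬝ᵥ u + r`. Weak duality is then immediate. For strong duality, if `w` is below the primal
value then `(0, w)` lies outside the closed convex set `C + Ici 0`. A separating functional is
bounded below on that set, hence nonnegative on the cone `Ici 0`; the feasible point makes its
`r`-coefficient positive, and dividing by it yields `λ ≥ 0` with `g λ > w`. Since `w` is strictly
below the value, no constraint qualification is needed.
-/

open Matrix Set Pointwise

theorem mem_add_Ici_zero_iff {E : Type*} [AddCommGroup E] [PartialOrder E] [IsOrderedAddMonoid E]
    {s : Set E} {z : E} : z ∈ s + Ici 0 ↔ ∃ p ∈ s, p ≤ z := by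
  constructor
  · rintro ⟨p, hp, q, hq, rfl⟩
    exact ⟨p, hp, le_add_of_nonneg_right hq⟩
  · rintro ⟨p, hp, hpz⟩
    exact ⟨p, hp, z - p, sub_nonneg.2 hpz, add_sub_cancel _ _⟩

theorem nonneg_of_forall_lt_add_mul {α a b : ℝ} (h : ∀ t, 0 ≤ t → α < a + t * b) : 0 ≤ b := by
  by_contra! hb
  have ha : α < a := by simpa using h 0 le_rfl
  have hcancel : (a - α) / -b * b = α - a := by field_simp [hb.ne]; ring
  have := h ((a - α) / -b) (div_nonneg (sub_nonneg.2 ha.le) (neg_nonneg.2 hb.le))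
  linarith

theorem LinearMap.nonneg_of_lt_on_add_Ici {E : Type*} [AddCommGroup E] [PartialOrder E]
    [IsOrderedAddMonoid E] [Module ℝ E] [PosSMulMono ℝ E] (φ : E →ₗ[ℝ] ℝ) {s : Set E}
    (hs : s.Nonempty) {α : ℝ} (hα : ∀ z ∈ s + Ici 0, α < φ z) {q : E} (hq : 0 ≤ q) :
    0 ≤ φ q := by
  obtain ⟨p, hp⟩ := hs
  refine nonneg_of_forall_lt_add_mul (α := α) (a := φ p) fun t ht => ?_
  simpa using hα (p + t • q) (add_mem_add hp (smul_nonneg ht hq))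

theorem LinearMap.apply_eq_dotProduct_add_mul {ι : Type*} [Fintype ι] [DecidableEq ι]
    (φ : (ι → ℝ) × ℝ →ₗ[ℝ] ℝ) (p : (ι → ℝ) × ℝ) :
    φ p = (fun j => φ (Pi.single j 1, 0)) ⬝ᵥ p.1 + φ (0, 1) * p.2 := by
  have hp : p = ∑ j, p.1 j • ((Pi.single j 1 : ι → ℝ), (0 : ℝ)) + p.2 • (0, 1) := by
    ext <;> simp [Prod.fst_sum, Prod.snd_sum, Finset.sum_apply, Pi.single_apply]
  conv_lhs => rw [hp]
  simp only [map_add, map_sum, map_smul, smul_eq_mul, dotProduct, mul_comm]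

def valueMap {ι κ : Type*} [Fintype κ] (A : Matrix ι κ ℝ) (b : ι → ℝ) (c : κ → ℝ) :
    (κ → ℝ) →ᵃ[ℝ] (ι → ℝ) × ℝ :=
  (A.mulVecLin.prod (dotProductBilin ℝ ℝ c)).toAffineMap + AffineMap.const ℝ _ (-b, 0)

@[simp]
theorem valueMap_apply {ι κ : Type*} [Fintype κ] (A : Matrix ι κ ℝ) (b : ι → ℝ) (c : κ → ℝ)
    (x : κ → ℝ) : valueMap A b c x = (A *ᵥ x - b, c ⬝ᵥ x) := by
  simp [valueMap, sub_eq_add_neg]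

theorem valueMap_fst_nonpos_iff {ι κ : Type*} [Fintype κ] (A : Matrix ι κ ℝ) (b : ι → ℝ)
    (c : κ → ℝ) (x : κ → ℝ) : (valueMap A b c x).1 ≤ 0 ↔ A *ᵥ x ≤ b := by
  simp

section ValueSpace

variable {ι : Type*} [Fintype ι]

def valueLagrangian (lam : ι → ℝ) : (ι → ℝ) × ℝ →ₗ[ℝ] ℝ :=
  dotProductBilin ℝ ℝ lam ∘ₗ LinearMap.fst ℝ _ ℝ + LinearMap.snd ℝ _ ℝ

@[simp]
theorem valueLagrangian_apply (lam : ι → ℝ) (p : (ι → ℝ) × ℝ) :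
    valueLagrangian lam p = lam ⬝ᵥ p.1 + p.2 :=
  rfl

theorem valueLagrangian_le_snd {lam : ι → ℝ} (hlam : 0 ≤ lam) {p : (ι → ℝ) × ℝ} (hp : p.1 ≤ 0) :
    valueLagrangian lam p ≤ p.2 := by
  simpa using dotProduct_le_dotProduct_of_nonneg_left hp hlam

theorem exists_nonneg_lt_valueLagrangian {C : Set ((ι → ℝ) × ℝ)} (hconv : Convex ℝ C)
    (hcomp : IsCompact C) (hfeas : ∃ p ∈ C, p.1 ≤ 0) {w : ℝ}
    (hw : ∀ p ∈ C, p.1 ≤ 0 → w < p.2) :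
    ∃ lam : ι → ℝ, 0 ≤ lam ∧ ∀ p ∈ C, w < valueLagrangian lam p := by
  classical
  obtain ⟨p₀, hp₀, hp₀feas⟩ := hfeas
  have hw_notMem : ((0 : ι → ℝ), w) ∉ C + Ici 0 := by
    rw [mem_add_Ici_zero_iff]
    rintro ⟨p, hp, hle⟩
    exact (hw p hp hle.1).not_ge hle.2
  obtain ⟨φ, α, hφw, hφ⟩ := geometric_hahn_banach_point_closed
    (hconv.add (convex_Ici 0)) (isClosed_Ici.add_left_of_isCompact hcomp) hw_notMem
  have hmono : ∀ q, 0 ≤ q → 0 ≤ φ q := fun q hq =>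
    φ.toLinearMap.nonneg_of_lt_on_add_Ici ⟨p₀, hp₀⟩ hφ hq
  have hsnd : ∀ r : ℝ, φ (0, r) = r * φ (0, 1) := fun r => by
    simpa using φ.map_smul r ((0 : ι → ℝ), (1 : ℝ))
  set μ := φ (0, 1)
  have hC_sub : C ⊆ C + Ici 0 := fun p hp => mem_add_Ici_zero_iff.2 ⟨p, hp, le_rfl⟩
  have hμ : 0 < μ := by
    have hp₀_le : φ p₀ ≤ φ (0, p₀.2) := by
      have := hmono ((0, p₀.2) - p₀) (by simpa [Prod.le_def] using hp₀feas)
      rwa [map_sub, sub_nonneg] at this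
    have hlt : w * μ < p₀.2 * μ := by
      rw [← hsnd, ← hsnd]
      exact (hφw.trans (hφ p₀ (hC_sub hp₀))).trans_le hp₀_le
    by_contra! hμ_nonpos
    exact hlt.not_ge (mul_le_mul_of_nonpos_right (hw p₀ hp₀ hp₀feas).le hμ_nonpos)
  refine ⟨μ⁻¹ • fun j => φ (Pi.single j 1, 0), fun j => ?_, fun p hp => ?_⟩
  · exact mul_nonneg (inv_nonneg.2 hμ.le) (hmono _ (by simp [Prod.le_def, Pi.single_nonneg]))
  · have hlt := hφw.trans (hφ p (hC_sub hp))
    have hφp := φ.toLinearMap.apply_eq_dotProduct_add_mul p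
    rw [ContinuousLinearMap.coe_coe] at hφp
    rw [hsnd, hφp] at hlt
    rw [valueLagrangian_apply, smul_dotProduct, smul_eq_mul, ← mul_lt_mul_iff_of_pos_left hμ]
    field_simp
    linarith

theorem inf'_valueLagrangian_le {E : Type*} [AddCommGroup E] [Module ℝ E]
    (F : E →ᵃ[ℝ] (ι → ℝ) × ℝ) {X : Finset E} (hX : X.Nonempty) {lam : ι → ℝ} (hlam : 0 ≤ lam)
    {x : E} (hx : x ∈ convexHull ℝ (X : Set E)) (hxF : (F x).1 ≤ 0) :
    X.inf' hX (fun y => valueLagrangian lam (F y)) ≤ (F x).2 := by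
  have hFx : F x ∈ convexHull ℝ (F '' X) := F.image_convexHull _ ▸ mem_image_of_mem F hx
  calc X.inf' hX (fun y => valueLagrangian lam (F y)) ≤ valueLagrangian lam (F x) := by
        refine convexHull_min ?_ (convex_halfSpace_ge (valueLagrangian lam).isLinear _) hFx
        rintro _ ⟨y, hy, rfl⟩
        exact X.inf'_le (fun y => valueLagrangian lam (F y)) hy
    _ ≤ (F x).2 := valueLagrangian_le_snd hlam hxF

theorem exists_lt_inf'_valueLagrangian {E : Type*} [AddCommGroup E] [Module ℝ E]
    (F : E →ᵃ[ℝ] (ι → ℝ) × ℝ) {X : Finset E} (hX : X.Nonempty)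
    (hfeas : ∃ x ∈ convexHull ℝ (X : Set E), (F x).1 ≤ 0) {w : ℝ}
    (hw : ∀ x ∈ convexHull ℝ (X : Set E), (F x).1 ≤ 0 → w < (F x).2) :
    ∃ lam : ι → ℝ, 0 ≤ lam ∧ w < X.inf' hX (fun y => valueLagrangian lam (F y)) := by
  have hFX : F '' convexHull ℝ (X : Set E) = convexHull ℝ (F '' X) := F.image_convexHull _
  obtain ⟨x₀, hx₀, hx₀F⟩ := hfeas
  obtain ⟨lam, hlam, hlt⟩ := exists_nonneg_lt_valueLagrangian
    (hFX ▸ convex_convexHull ℝ _) (hFX ▸ (X.finite_toSet.image F).isCompact_convexHull ℝ)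
    ⟨F x₀, mem_image_of_mem F hx₀, hx₀F⟩ (by rintro _ ⟨x, hx, rfl⟩; exact hw x hx)
  refine ⟨lam, hlam, (Finset.lt_inf'_iff hX).2 fun y hy => hlt _ ?_⟩
  exact mem_image_of_mem F (subset_convexHull ℝ _ hy)

end ValueSpace

/-- Geoffrion's theorem: the Lagrangian dual of a linear program with finite
set `X` and relaxed constraints `Ax ≤ b` equals the value of the linear
program over the convex hull of `X`, assuming the latter is feasible. -/
theorem geoffrion_lagrangian_dual {n m : ℕ}
    (c : Fin n → ℝ) (A : Matrix (Fin m) (Fin n) ℝ) (b : Fin m → ℝ)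
    (X : Finset (Fin n → ℝ)) (hX : X.Nonempty)
    (g : (Fin m → ℝ) → ℝ)
    (hg : ∀ lam, g lam =
      X.inf' hX (fun x => ∑ i, c i * x i + ∑ j, lam j * (A.mulVec x j - b j)))
    (hfeas : ∃ x ∈ convexHull ℝ (X : Set (Fin n → ℝ)), ∀ j, A.mulVec x j ≤ b j) :
    sSup {r : ℝ | ∃ lam : Fin m → ℝ, (∀ j, 0 ≤ lam j) ∧ r = g lam} =
      sInf {r : ℝ | ∃ x ∈ convexHull ℝ (X : Set (Fin n → ℝ)),
        (∀ j, A.mulVec x j ≤ b j) ∧ r = ∑ i, c i * x i} := by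
  set V := {r : ℝ | ∃ x ∈ convexHull ℝ (X : Set (Fin n → ℝ)),
    (∀ j, A.mulVec x j ≤ b j) ∧ r = ∑ i, c i * x i}
  set F := valueMap A b c
  have hgF : ∀ lam, g lam = X.inf' hX fun x => valueLagrangian lam (F x) := fun lam => by
    simp [F, hg, dotProduct, add_comm]
  have hweak : ∀ lam : Fin m → ℝ, 0 ≤ lam → ∀ r ∈ V, g lam ≤ r := by
    rintro lam hlam _ ⟨x, hx, hxb, rfl⟩
    rw [hgF]
    exact (inf'_valueLagrangian_le F hX hlam hx ((valueMap_fst_nonpos_iff ..).2 hxb)).trans_eq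
      (by simp [F, dotProduct])
  obtain ⟨x₀, hx₀, hx₀b⟩ := hfeas
  have hV : V.Nonempty := ⟨_, x₀, hx₀, hx₀b, rfl⟩
  refine csSup_eq_of_forall_le_of_forall_lt_exists_gt ⟨g 0, 0, fun _ => le_rfl, rfl⟩ ?_ ?_
  · rintro _ ⟨lam, hlam, rfl⟩
    exact le_csInf hV (hweak lam hlam)
  · intro w hw
    obtain ⟨lam, hlam, hlt⟩ := exists_lt_inf'_valueLagrangian F hX
      ⟨x₀, hx₀, (valueMap_fst_nonpos_iff ..).2 hx₀b⟩ fun x hx hxb => by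
        have hxV : c ⬝ᵥ x ∈ V := ⟨x, hx, (valueMap_fst_nonpos_iff ..).1 hxb, rfl⟩
        simpa [F] using hw.trans_le (csInf_le ⟨g 0, hweak 0 le_rfl⟩ hxV)
    exact ⟨g lam, ⟨lam, hlam, rfl⟩, hgF lam ▸ hlt⟩
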